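/- If G is a minimum counterexample, then no two distinct vertices of degree 1 in G have a common neighbor. -/

import Mathlib

open SimpleGraph

universe u

/-- The graph obtained from a 5-cycle by blowing up each vertex into an
independent set of size 2: parts indexed by `ZMod 5`, consecutive parts
completely joined. -/
def C5Sq : SimpleGraph (ZMod 5 × Fin 2) :=
  SimpleGraph.fromRel (fun a b => a.1 = b.1 + 1)

/-- `M` is an induced matching of `G`: a set of edges of `G` such that no two
edges of `M` share an endpoint and no edge of `G` joins endpoints of two
distinct edges of `M`. -/
def IsInducedMatching {V : Type*} (G : SimpleGraph V) (M : Finset (Sym2 V)) : Prop :=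
  (M : Set (Sym2 V)) ⊆ G.edgeSet ∧
    ∀ e ∈ M, ∀ f ∈ M, e ≠ f → ∀ a ∈ e, ∀ b ∈ f, a ≠ b ∧ ¬ G.Adj a b

/-- The strong (induced) matching number of `G`. -/
noncomputable def strongMatchingNumber {V : Type*} (G : SimpleGraph V) : ℕ :=
  sSup {k | ∃ M : Finset (Sym2 V), IsInducedMatching G M ∧ M.card = k}

/-- The degree of a vertex. -/
noncomputable def deg {V : Type*} (G : SimpleGraph V) (v : V) : ℕ :=
  (G.neighborSet v).ncard

/-- The number of isolated vertices of `G`. -/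
noncomputable def numIsolated {V : Type*} (G : SimpleGraph V) : ℕ :=
  {v : V | ∀ w, ¬ G.Adj v w}.ncard

/-- The number of connected components of `G` isomorphic to `C5Sq`. -/
noncomputable def numC5SqComponents {V : Type*} (G : SimpleGraph V) : ℕ :=
  {c : G.ConnectedComponent | Nonempty (G.induce c.supp ≃g C5Sq)}.ncard

/-- `G` is a minimum counterexample: connected, maximum degree at most 4,
no isolated vertices, not isomorphic to `C5Sq`, with `9·ν_s(G) < n(G)`,
while every graph of smaller order and maximum degree at most 4 satisfies
`9·ν_s(H) ≥ n(H) − i(H) − n₅(H)`. -/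
def MinCounterexample {V : Type u} [Fintype V] (G : SimpleGraph V) : Prop :=
  G.Connected ∧ (∀ v, deg G v ≤ 4) ∧ (∀ v, ∃ w, G.Adj v w) ∧
    IsEmpty (G ≃g C5Sq) ∧
    9 * strongMatchingNumber G < Fintype.card V ∧
    ∀ (W : Type u) [Fintype W] (H : SimpleGraph W),
      Fintype.card W < Fintype.card V → (∀ w, deg H w ≤ 4) →
      (Fintype.card W : ℤ) - numIsolated H - numC5SqComponents H ≤
        9 * strongMatchingNumber H

/-!
Let `u₁, u₂` be leaves at `v` and let `I` be the set of vertices outside `N[v]` all of whose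
neighbours lie in `N[v]`. Deleting `N[v] ∪ I` leaves a graph with no isolated vertices and no
`C₅²` component (such a 4-regular component would be all of `G`), so minimality, together
with the induced edge `u₁v`, gives `|N[v] ∪ I| ≥ 10`, i.e. `|I| ≥ 5`. The vertices of `I` only
see the at most two other neighbours of `v`; degree counting then forces exactly two of them,
`x` and `y`, non-adjacent and each carrying a pendant vertex from `I`. These two pendant edges
form an induced matching, so deleting `T = N[v] ∪ N(x) ∪ N(y)` together with the vertices it
isolates must remove at least `19` vertices, whereas counting shows it removes at most `15`.
-/

section Degree

variable {V : Type*} {G : SimpleGraph V}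

lemma neighborSet_eq_singleton_of_deg_eq_one {u v : V} (h : deg G u = 1) (huv : G.Adj u v) :
    G.neighborSet u = {v} := by
  obtain ⟨a, ha⟩ := Set.ncard_eq_one.mp h
  have hv : v ∈ G.neighborSet u := huv
  rw [ha, Set.mem_singleton_iff] at hv
  rw [ha, hv]

lemma adj_of_neighborSet_eq_singleton {u v : V} (h : G.neighborSet u = {v}) : G.Adj u v := by
  rw [← mem_neighborSet, h]
  rfl

lemma deg_iso {W : Type*} {H : SimpleGraph W} (φ : G ≃g H) (x : V) :
    deg G x = deg H (φ x) := by
  rw [deg, deg, ← Nat.card_coe_set_eq, ← Nat.card_coe_set_eq]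
  exact Nat.card_congr (φ.mapNeighborSet x)

lemma image_val_neighborSet_induce_subset (s : Set V) (x : s) :
    Subtype.val '' (G.induce s).neighborSet x ⊆ G.neighborSet x := by
  rintro _ ⟨y, hy, rfl⟩
  exact hy

lemma deg_induce_le [Finite V] (s : Set V) (x : s) : deg (G.induce s) x ≤ deg G x := by
  rw [deg, deg, ← Set.ncard_image_of_injective _ Subtype.val_injective]
  exact Set.ncard_le_ncard (image_val_neighborSet_induce_subset s x)

lemma neighborSet_subset_of_deg_le_deg_induce [Finite V] {s : Set V} {x : s}
    (h : deg G x ≤ deg (G.induce s) x) : G.neighborSet x ⊆ s := by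
  rw [deg, deg, ← Set.ncard_image_of_injective _ Subtype.val_injective] at h
  rw [← Set.eq_of_subset_of_ncard_le (image_val_neighborSet_induce_subset s x) h]
  exact Subtype.coe_image_subset s _

lemma ncard_le_mul_ncard_of_forall_exists_adj [Finite V] {k : ℕ} (hdeg : ∀ v, deg G v ≤ k)
    {J Z : Set V} (hJ : ∀ w ∈ J, ∃ z ∈ Z, G.Adj z w) : J.ncard ≤ k * Z.ncard := by
  classical
  have hZ := Z.toFinite
  calc J.ncard ≤ (⋃ z ∈ hZ.toFinset, G.neighborSet z).ncard :=
        Set.ncard_le_ncard fun w hw => by simpa using hJ w hw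
    _ ≤ ∑ z ∈ hZ.toFinset, (G.neighborSet z).ncard := Finset.set_ncard_biUnion_le _ _
    _ ≤ ∑ _z ∈ hZ.toFinset, k := Finset.sum_le_sum fun z _ => hdeg z
    _ = k * Z.ncard := by
        rw [Finset.sum_const, smul_eq_mul, mul_comm, Set.ncard_eq_toFinset_card]

lemma ncard_neighborSet_union_le [Finite V] {k : ℕ} (hdeg : ∀ v, deg G v ≤ k) {v x y : V}
    (hx : G.Adj v x) (hy : G.Adj v y) :
    (G.neighborSet x ∪ G.neighborSet y).ncard ≤ 2 * k - 1 := by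
  have hv : 0 < (G.neighborSet x ∩ G.neighborSet y).ncard :=
    (Set.ncard_pos (Set.toFinite _)).2 ⟨v, hx.symm, hy.symm⟩
  have := Set.ncard_union_add_ncard_inter (G.neighborSet x) (G.neighborSet y)
  have : (G.neighborSet x).ncard ≤ k := hdeg x
  have : (G.neighborSet y).ncard ≤ k := hdeg y
  omega

lemma SimpleGraph.Reachable.mem_of_forall_adj_mem {U : Set V}
    (hU : ∀ p ∈ U, ∀ q, G.Adj p q → q ∈ U) {p q : V} (hpq : G.Reachable p q)
    (hp : p ∈ U) : q ∈ U := by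
  obtain ⟨walk⟩ := hpq
  induction walk with
  | nil => exact hp
  | cons hadj _ ih => exact ih (hU _ hp _ hadj)

end Degree

instance : DecidableRel C5Sq.Adj := fun a b =>
  decidable_of_iff (a ≠ b ∧ (a.1 = b.1 + 1 ∨ b.1 = a.1 + 1))
    (by rw [C5Sq, SimpleGraph.fromRel_adj])

lemma deg_C5Sq (a : ZMod 5 × Fin 2) : deg C5Sq a = 4 := by
  rw [deg, Set.ncard_eq_toFinset_card']
  revert a
  decide

/-- A component of `G - T` isomorphic to `C5Sq` is 4-regular, so with `Δ(G) ≤ 4` no edge of `G`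
leaves it, and connectivity of `G` would force it to be all of `G`. -/
lemma numC5SqComponents_induce_compl_eq_zero {V : Type*} [Finite V] {G : SimpleGraph V}
    (hconn : G.Connected) (hdeg : ∀ v, deg G v ≤ 4) {T : Set V} (hT : T.Nonempty) :
    numC5SqComponents (G.induce Tᶜ) = 0 := by
  set H := G.induce Tᶜ
  suffices h : {c : H.ConnectedComponent | Nonempty (H.induce c.supp ≃g C5Sq)} = ∅ by
    rw [numC5SqComponents, h, Set.ncard_empty]
  refine Set.eq_empty_iff_forall_notMem.2 fun c ⟨φ⟩ => ?_
  have hclosed : ∀ p (hp : p ∈ Tᶜ), H.connectedComponentMk ⟨p, hp⟩ = c →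
      G.neighborSet p ⊆ Tᶜ := by
    intro p hp hpc
    let x : c.supp := ⟨⟨p, hp⟩, hpc⟩
    apply neighborSet_subset_of_deg_le_deg_induce (x := (⟨p, hp⟩ : ↥Tᶜ))
    calc deg G p ≤ 4 := hdeg p
      _ = deg (H.induce c.supp) x := ((deg_iso φ x).trans (deg_C5Sq _)).symm
      _ ≤ deg H ⟨p, hp⟩ := deg_induce_le c.supp x
  let U : Set V := {p | ∃ hp : p ∈ Tᶜ, H.connectedComponentMk ⟨p, hp⟩ = c}
  have hU : ∀ p ∈ U, ∀ q, G.Adj p q → q ∈ U := by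
    rintro p ⟨hp, hpc⟩ q hpq
    have hq := hclosed p hp hpc hpq
    exact ⟨hq, (ConnectedComponent.connectedComponentMk_eq_of_adj
      (show H.Adj ⟨q, hq⟩ ⟨p, hp⟩ from hpq.symm)).trans hpc⟩
  obtain ⟨⟨p, hp⟩, hpc⟩ := c.exists_rep
  obtain ⟨t, ht⟩ := hT
  exact ((hconn.preconnected p t).mem_of_forall_adj_mem hU ⟨hp, hpc⟩).1 ht

section InducedMatching

variable {V : Type*} {G : SimpleGraph V}

lemma strongMatchingNumber_bddAbove [Finite V] :
    BddAbove {k | ∃ M : Finset (Sym2 V), IsInducedMatching G M ∧ M.card = k} := by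
  classical
  have := Fintype.ofFinite V
  refine ⟨Fintype.card (Sym2 V), ?_⟩
  rintro k ⟨M, -, rfl⟩
  exact M.card_le_univ

lemma IsInducedMatching.card_le_strongMatchingNumber [Finite V] {M : Finset (Sym2 V)}
    (hM : IsInducedMatching G M) : M.card ≤ strongMatchingNumber G :=
  le_csSup strongMatchingNumber_bddAbove ⟨M, hM, rfl⟩

lemma exists_isInducedMatching_card_eq_strongMatchingNumber [Finite V] :
    ∃ M, IsInducedMatching G M ∧ M.card = strongMatchingNumber G := by
  have hne : {k | ∃ M : Finset (Sym2 V), IsInducedMatching G M ∧ M.card = k}.Nonempty :=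
    ⟨0, ∅, ⟨by simp, by simp⟩, rfl⟩
  exact Nat.sSup_mem hne strongMatchingNumber_bddAbove

lemma isInducedMatching_singleton {a b : V} (h : G.Adj a b) : IsInducedMatching G {s(a, b)} :=
  ⟨by simpa using h, fun e he f hf hef =>
    absurd ((Finset.mem_singleton.1 he).trans (Finset.mem_singleton.1 hf).symm) hef⟩

lemma IsInducedMatching.union [DecidableEq V] {M₁ M₂ : Finset (Sym2 V)}
    (h₁ : IsInducedMatching G M₁) (h₂ : IsInducedMatching G M₂)
    (h : ∀ e ∈ M₁, ∀ f ∈ M₂, ∀ a ∈ e, ∀ b ∈ f, a ≠ b ∧ ¬ G.Adj a b) :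
    IsInducedMatching G (M₁ ∪ M₂) := by
  refine ⟨Finset.coe_union M₁ M₂ ▸ Set.union_subset h₁.1 h₂.1, ?_⟩
  intro e he f hf hef a ha b hb
  rcases Finset.mem_union.1 he with he | he <;> rcases Finset.mem_union.1 hf with hf | hf
  · exact h₁.2 e he f hf hef a ha b hb
  · exact h e he f hf a ha b hb
  · exact (h f hf e he b hb a ha).imp Ne.symm fun hn hadj => hn hadj.symm
  · exact h₂.2 e he f hf hef a ha b hb

lemma IsInducedMatching.image_val [DecidableEq V] {s : Set V} {M : Finset (Sym2 s)}
    (hM : IsInducedMatching (G.induce s) M) :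
    IsInducedMatching G (M.image (Sym2.map Subtype.val)) := by
  refine ⟨fun e he => ?_, fun e he f hf hef a ha b hb => ?_⟩
  · obtain ⟨e, he', rfl⟩ := Finset.mem_image.1 he
    have := hM.1 he'
    induction e with
    | _ a b => exact this
  · obtain ⟨e, he', rfl⟩ := Finset.mem_image.1 he
    obtain ⟨f, hf', rfl⟩ := Finset.mem_image.1 hf
    obtain ⟨a, ha', rfl⟩ := Sym2.mem_map.1 ha
    obtain ⟨b, hb', rfl⟩ := Sym2.mem_map.1 hb
    obtain ⟨hne, hadj⟩ := hM.2 e he' f hf' (fun h => hef (h ▸ rfl)) a ha' b hb'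
    exact ⟨Subtype.val_injective.ne hne, hadj⟩

lemma isInducedMatching_pair_of_neighborSet_eq_singleton [DecidableEq V] {x y w₁ w₂ : V}
    (hw₁ : G.neighborSet w₁ = {x}) (hw₂ : G.neighborSet w₂ = {y}) (hne : x ≠ y)
    (hxy : ¬ G.Adj x y) : IsInducedMatching G {s(x, w₁), s(y, w₂)} := by
  have hadj₁ : ∀ q, G.Adj w₁ q ↔ q = x := fun q => by
    rw [← mem_neighborSet, hw₁, Set.mem_singleton_iff]
  have hadj₂ : ∀ q, G.Adj w₂ q ↔ q = y := fun q => by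
    rw [← mem_neighborSet, hw₂, Set.mem_singleton_iff]
  rw [Finset.insert_eq]
  refine (isInducedMatching_singleton ((hadj₁ x).2 rfl).symm).union
    (isInducedMatching_singleton ((hadj₂ y).2 rfl).symm) ?_
  simp only [Finset.mem_singleton, forall_eq, Sym2.mem_iff, forall_eq_or_imp]
  grind [G.adj_comm, G.loopless]

lemma strongMatchingNumber_induce_compl_add_card_le [Finite V] {T : Set V}
    {M₀ : Finset (Sym2 V)} (hM₀ : IsInducedMatching G M₀)
    (hT : ∀ e ∈ M₀, ∀ p ∈ e, G.neighborSet p ⊆ T) :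
    strongMatchingNumber (G.induce Tᶜ) + M₀.card ≤ strongMatchingNumber G := by
  classical
  obtain ⟨M, hM, hcard⟩ :=
    exists_isInducedMatching_card_eq_strongMatchingNumber (G := G.induce Tᶜ)
  have hM₀T : ∀ e ∈ M₀, ∀ p ∈ e, p ∈ T := by
    intro e he p hp
    have hadj : G.Adj p (Sym2.Mem.other hp) := by
      rw [← G.mem_edgeSet, Sym2.other_spec hp]
      exact hM₀.1 he
    exact hT e he _ (Sym2.other_mem hp) hadj.symm
  set M' := M.image (Sym2.map Subtype.val)
  have hsep : ∀ e ∈ M', ∀ f ∈ M₀, ∀ a ∈ e, ∀ b ∈ f, a ≠ b ∧ ¬ G.Adj a b := by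
    intro e he f hf a ha b hb
    obtain ⟨e, -, rfl⟩ := Finset.mem_image.1 he
    obtain ⟨a, -, rfl⟩ := Sym2.mem_map.1 ha
    exact ⟨fun h => a.2 (h ▸ hM₀T f hf b hb), fun h => a.2 (hT f hf b hb h.symm)⟩
  have hdisj : Disjoint M' M₀ := Finset.disjoint_left.2 fun e he he₀ =>
    (hsep e he e he₀ _ (Sym2.out_fst_mem e) _ (Sym2.out_fst_mem e)).1 rfl
  calc strongMatchingNumber (G.induce Tᶜ) + M₀.card = (M' ∪ M₀).card := by
        rw [Finset.card_union_of_disjoint hdisj,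
          Finset.card_image_of_injective _ (Sym2.map.injective Subtype.val_injective), hcard]
    _ ≤ strongMatchingNumber G := (hM.image_val.union hM₀ hsep).card_le_strongMatchingNumber

end InducedMatching

section Enclosed

variable {V : Type*}

/-- The vertices that are isolated in `G - T`. -/
def enclosed (G : SimpleGraph V) (T : Set V) : Set V :=
  {w | w ∉ T ∧ G.neighborSet w ⊆ T}

variable {G : SimpleGraph V}

lemma numIsolated_induce_compl_union_enclosed (T : Set V) :
    numIsolated (G.induce (T ∪ enclosed G T)ᶜ) = 0 := by
  suffices h : {w : ↥(T ∪ enclosed G T)ᶜ | ∀ q, ¬ (G.induce _).Adj w q} = ∅ by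
    rw [numIsolated, h, Set.ncard_empty]
  refine Set.eq_empty_iff_forall_notMem.2 fun ⟨w, hw⟩ hiso => ?_
  simp only [Set.mem_compl_iff, Set.mem_union, not_or] at hw
  obtain ⟨q, hwq, hqT⟩ := Set.not_subset.1 fun h => hw.2 ⟨hw.1, h⟩
  refine hiso ⟨q, ?_⟩ hwq
  rintro (hq | ⟨-, hq⟩)
  · exact hqT hq
  · exact hw.1 (hq (G.adj_symm hwq))

lemma neighborSet_subset_sdiff_of_mem_enclosed {T B : Set V}
    (hB : ∀ b ∈ B, G.neighborSet b ⊆ T) {w : V} (hw : w ∈ enclosed G T) :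
    G.neighborSet w ⊆ T \ B :=
  fun q hq => ⟨hw.2 hq, fun hqB => hw.1 (hB q hqB (G.adj_symm hq))⟩

lemma neighborSet_subset_of_mem_enclosed_insert {v w : V} {L : Set V}
    (hL : ∀ u ∈ L, G.neighborSet u ⊆ {v})
    (hw : w ∈ enclosed G (insert v (G.neighborSet v))) : G.neighborSet w ⊆ G.neighborSet v \ L := by
  intro q hq
  have hwq : w ∈ G.neighborSet q := G.adj_symm hq
  rcases hw.2 hq with rfl | hqv
  · exact absurd (Set.mem_insert_of_mem _ hwq) hw.1
  · refine ⟨hqv, fun hqL => hw.1 ?_⟩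
    rw [Set.mem_singleton_iff.1 (hL q hqL hwq)]
    exact Set.mem_insert _ _

lemma neighborSet_subset_of_mem_union_enclosed {u₁ u₂ v x y : V}
    (hu₁ : G.neighborSet u₁ = {v}) (hu₂ : G.neighborSet u₂ = {v})
    (hS : G.neighborSet v \ {u₁, u₂} = {x, y}) {b : V}
    (hb : b ∈ insert v (G.neighborSet v) ∪ enclosed G (insert v (G.neighborSet v))) :
    G.neighborSet b ⊆ insert v (G.neighborSet v) ∪ (G.neighborSet x ∪ G.neighborSet y) := by
  have hN : {v} ⊆ insert v (G.neighborSet v) := Set.singleton_subset_iff.2 (Set.mem_insert _ _)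
  rcases hb with (rfl | hb) | hb
  · exact (Set.subset_insert _ _).trans Set.subset_union_left
  · by_cases hbL : b ∈ ({u₁, u₂} : Set V)
    · rcases hbL with rfl | rfl
      exacts [hu₁ ▸ hN.trans Set.subset_union_left, hu₂ ▸ hN.trans Set.subset_union_left]
    · rcases (hS ▸ ⟨hb, hbL⟩ : b ∈ ({x, y} : Set V)) with rfl | rfl
      exacts [Set.subset_union_left.trans Set.subset_union_right,
        Set.subset_union_right.trans Set.subset_union_right]
  · exact hb.2.trans Set.subset_union_left

/-- Vertices enclosed by `B ∪ A` only see `A \ B` when `B` is closed into `B ∪ A`, so each of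
them is one of the at most four neighbours of a vertex of `A \ B`. -/
lemma ncard_union_enclosed_le [Finite V] (hdeg : ∀ v, deg G v ≤ 4)
    (hnoiso : ∀ v, ∃ w, G.Adj v w) {A B : Set V}
    (hB : ∀ b ∈ B, G.neighborSet b ⊆ B ∪ A) :
    (B ∪ A ∪ enclosed G (B ∪ A)).ncard ≤ B.ncard + 5 * (A \ B).ncard := by
  have henc : (enclosed G (B ∪ A)).ncard ≤ 4 * (A \ B).ncard :=
    ncard_le_mul_ncard_of_forall_exists_adj hdeg fun w hw => by
      obtain ⟨q, hq⟩ := hnoiso w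
      have hq' := neighborSet_subset_sdiff_of_mem_enclosed hB hw hq
      rw [Set.union_sdiff_left] at hq'
      exact ⟨q, hq', G.adj_symm hq⟩
  have hBA : (B ∪ A).ncard ≤ B.ncard + (A \ B).ncard := by
    rw [← Set.union_sdiff_self]
    exact Set.ncard_union_le _ _
  have := Set.ncard_union_le (B ∪ A) (enclosed G (B ∪ A))
  omega

end Enclosed

section TwoNeighbours

variable {V : Type*} {G : SimpleGraph V} {v x y : V} {I : Set V}

lemma subset_neighborSet_union (hnoiso : ∀ v, ∃ w, G.Adj v w)
    (hI : ∀ w ∈ I, G.neighborSet w ⊆ {x, y}) : I ⊆ G.neighborSet x ∪ G.neighborSet y := by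
  intro w hw
  obtain ⟨q, hq⟩ := hnoiso w
  rcases hI w hw hq with rfl | rfl
  · exact Or.inl hq.symm
  · exact Or.inr hq.symm

lemma not_adj_of_subset_neighborSet_union [Finite V] (hdeg : ∀ v, deg G v ≤ 4)
    (hx : G.Adj v x) (hy : G.Adj v y) (hIxy : I ⊆ G.neighborSet x ∪ G.neighborSet y)
    (hvI : v ∉ I) (hxI : x ∉ I) (hyI : y ∉ I) (hI : 5 ≤ I.ncard) : ¬ G.Adj x y := by
  intro hxy
  have hsub : insert x (insert y (insert v I)) ⊆ G.neighborSet x ∪ G.neighborSet y := by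
    simp only [Set.insert_subset_iff]
    exact ⟨Or.inr hxy.symm, Or.inl hxy, Or.inl hx.symm, hIxy⟩
  have hcard : (insert x (insert y (insert v I))).ncard = I.ncard + 3 := by
    rw [Set.ncard_insert_of_notMem, Set.ncard_insert_of_notMem, Set.ncard_insert_of_notMem hvI]
    · simp only [Set.mem_insert_iff, not_or]
      exact ⟨hy.ne.symm, hyI⟩
    · simp only [Set.mem_insert_iff, not_or]
      exact ⟨hxy.ne, hx.ne.symm, hxI⟩
  have := Set.ncard_le_ncard hsub
  have := ncard_neighborSet_union_le hdeg hx hy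
  omega

lemma exists_mem_neighborSet_eq_singleton [Finite V] (hdeg : ∀ v, deg G v ≤ 4)
    (hnoiso : ∀ v, ∃ w, G.Adj v w) (hy : G.Adj v y) (hvI : v ∉ I)
    (hI : ∀ w ∈ I, G.neighborSet w ⊆ {x, y}) (hI4 : 4 ≤ I.ncard) :
    ∃ w ∈ I, G.neighborSet w = {x} := by
  obtain ⟨w, hwI, hwy⟩ : ∃ w ∈ I, ¬ G.Adj y w := by
    by_contra! h
    have hsub : I ⊆ G.neighborSet y \ {v} := fun w hw => ⟨h w hw, fun hwv => hvI (hwv ▸ hw)⟩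
    have := Set.ncard_le_ncard hsub
    have := Set.ncard_sdiff_singleton_of_mem (s := G.neighborSet y) hy.symm
    have : (G.neighborSet y).ncard ≤ 4 := hdeg y
    omega
  have hwx : ∀ q ∈ G.neighborSet w, q = x := fun q hq => by
    rcases hI w hwI hq with rfl | rfl
    · rfl
    · exact absurd hq.symm hwy
  obtain ⟨q, hq⟩ := hnoiso w
  exact ⟨w, hwI, Set.eq_singleton_iff_unique_mem.2 ⟨hwx q hq ▸ hq, hwx⟩⟩

/-- `|B ∪ I| ≤ 5 + |I|` and `|A \ (B ∪ I)| ≤ |A| - |I| - 1 ≤ 6 - |I|`, so the bound of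
`ncard_union_enclosed_le` is at most `35 - 4|I| ≤ 15`. -/
lemma ncard_union_enclosed_le_fifteen [Finite V] (hdeg : ∀ v, deg G v ≤ 4)
    (hnoiso : ∀ v, ∃ w, G.Adj v w) (hx : G.Adj v x) (hy : G.Adj v y) {B : Set V} (hvB : v ∈ B)
    (hB : B.ncard ≤ 5) (hvI : v ∉ I) (hIA : I ⊆ G.neighborSet x ∪ G.neighborSet y)
    (hI : 5 ≤ I.ncard)
    (hclosed : ∀ b ∈ B ∪ I, G.neighborSet b ⊆ B ∪ (G.neighborSet x ∪ G.neighborSet y)) :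
    (B ∪ (G.neighborSet x ∪ G.neighborSet y) ∪
      enclosed G (B ∪ (G.neighborSet x ∪ G.neighborSet y))).ncard ≤ 15 := by
  set A := G.neighborSet x ∪ G.neighborSet y
  have hBIA : B ∪ I ∪ A = B ∪ A := by rw [Set.union_assoc, Set.union_eq_right.2 hIA]
  have henc := ncard_union_enclosed_le hdeg hnoiso (B := B ∪ I) (A := A) (hBIA ▸ hclosed)
  rw [hBIA] at henc
  have hvIA : insert v I ⊆ A := Set.insert_subset (Or.inl hx.symm) hIA
  have := Set.ncard_le_ncard (Set.sdiff_subset_sdiff_right (s := A)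
    (Set.insert_subset (Or.inl hvB) Set.subset_union_right : insert v I ⊆ B ∪ I))
  have := Set.ncard_sdiff_add_ncard_of_subset hvIA
  have := Set.ncard_insert_of_notMem hvI (Set.toFinite I)
  have : A.ncard ≤ 2 * 4 - 1 := ncard_neighborSet_union_le hdeg hx hy
  have := Set.ncard_union_le B I
  omega

end TwoNeighbours

namespace MinCounterexample

variable {V : Type u} [Fintype V] {G : SimpleGraph V}

/-- Minimality applied to `G - T`, whose strong matching number is at most `ν_s(G) - |M|`. -/
lemma nine_mul_card_lt_ncard (hG : MinCounterexample G) {T : Set V} (hT : T.Nonempty)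
    (hiso : numIsolated (G.induce Tᶜ) = 0) {M : Finset (Sym2 V)} (hM : IsInducedMatching G M)
    (hMT : ∀ e ∈ M, ∀ p ∈ e, G.neighborSet p ⊆ T) : 9 * M.card < T.ncard := by
  obtain ⟨hconn, hdeg, -, -, hlt, hmin⟩ := hG
  have : Fintype ↥Tᶜ := Fintype.ofFinite _
  have hcard : Fintype.card ↥Tᶜ = Tᶜ.ncard := by
    rw [← Nat.card_eq_fintype_card, Nat.card_coe_set_eq]
  have hsplit : T.ncard + Tᶜ.ncard = Fintype.card V := by
    rw [← Nat.card_eq_fintype_card]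
    exact Set.ncard_add_ncard_compl T
  have hpos : 0 < T.ncard := (Set.ncard_pos (Set.toFinite T)).2 hT
  have hsmaller := hmin ↥Tᶜ (G.induce Tᶜ) (by omega)
    (fun w => (deg_induce_le Tᶜ w).trans (hdeg w))
  rw [hiso, numC5SqComponents_induce_compl_eq_zero hconn hdeg hT, hcard] at hsmaller
  have := strongMatchingNumber_induce_compl_add_card_le hM hMT
  omega

lemma five_le_ncard_enclosed (hG : MinCounterexample G) {u v : V}
    (hu : G.neighborSet u = {v}) : 5 ≤ (enclosed G (insert v (G.neighborSet v))).ncard := by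
  set N := insert v (G.neighborSet v)
  have hbudget := hG.nine_mul_card_lt_ncard (T := N ∪ enclosed G N)
    ⟨v, Or.inl (Set.mem_insert _ _)⟩ (numIsolated_induce_compl_union_enclosed N)
    (isInducedMatching_singleton (adj_of_neighborSet_eq_singleton hu)) (by
      intro e he p hp
      rw [Finset.mem_singleton.1 he, Sym2.mem_iff] at hp
      rcases hp with rfl | rfl
      · rw [hu]
        exact Set.singleton_subset_iff.2 (Or.inl (Set.mem_insert _ _))
      · exact (Set.subset_insert _ _).trans Set.subset_union_left)
  have hN : N.ncard ≤ 5 := (Set.ncard_insert_le _ _).trans (Nat.succ_le_succ (hG.2.1 v))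
  have := Set.ncard_union_le N (enclosed G N)
  rw [Finset.card_singleton] at hbudget
  omega

lemma exists_neighborSet_sdiff_eq_pair (hG : MinCounterexample G) {u₁ u₂ v : V}
    (hne : u₁ ≠ u₂) (hu₁ : G.neighborSet u₁ = {v}) (hu₂ : G.neighborSet u₂ = {v}) :
    ∃ x y, x ≠ y ∧ G.neighborSet v \ {u₁, u₂} = {x, y} := by
  have ⟨_, hdeg, hnoiso, _⟩ := hG
  have hleaves : {u₁, u₂} ⊆ G.neighborSet v := by
    rintro u (rfl | rfl)
    exacts [(adj_of_neighborSet_eq_singleton hu₁).symm,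
      (adj_of_neighborSet_eq_singleton hu₂).symm]
  have hle : (G.neighborSet v \ {u₁, u₂}).ncard ≤ 2 := by
    have := Set.ncard_sdiff_add_ncard_of_subset hleaves
    rw [Set.ncard_pair hne] at this
    have : (G.neighborSet v).ncard ≤ 4 := hdeg v
    omega
  have hge : 5 ≤ 4 * (G.neighborSet v \ {u₁, u₂}).ncard := by
    refine (hG.five_le_ncard_enclosed hu₁).trans
      (ncard_le_mul_ncard_of_forall_exists_adj hdeg fun w hw => ?_)
    obtain ⟨q, hq⟩ := hnoiso w
    refine ⟨q, neighborSet_subset_of_mem_enclosed_insert ?_ hw hq, hq.symm⟩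
    rintro u (rfl | rfl)
    exacts [hu₁.subset, hu₂.subset]
  exact Set.ncard_eq_two.1 (by omega)

lemma eighteen_lt_ncard_union_enclosed (hG : MinCounterexample G) {x y w₁ w₂ : V}
    (hw₁ : G.neighborSet w₁ = {x}) (hw₂ : G.neighborSet w₂ = {y}) (hne : x ≠ y)
    (hxy : ¬ G.Adj x y) {T : Set V} (hxT : insert x (G.neighborSet x) ⊆ T)
    (hyT : insert y (G.neighborSet y) ⊆ T) : 18 < (T ∪ enclosed G T).ncard := by
  classical
  have hTT : T ⊆ T ∪ enclosed G T := Set.subset_union_left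
  have hbudget := hG.nine_mul_card_lt_ncard ⟨x, hTT (hxT (Set.mem_insert _ _))⟩
    (numIsolated_induce_compl_union_enclosed T)
    (isInducedMatching_pair_of_neighborSet_eq_singleton hw₁ hw₂ hne hxy) (by
      intro e he p hp
      simp only [Finset.mem_insert, Finset.mem_singleton] at he
      rcases he with rfl | rfl <;> rcases Sym2.mem_iff.1 hp with rfl | rfl
      · exact ((Set.subset_insert _ _).trans hxT).trans hTT
      · exact hw₁ ▸ Set.singleton_subset_iff.2 (hTT (hxT (Set.mem_insert _ _)))
      · exact ((Set.subset_insert _ _).trans hyT).trans hTT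
      · exact hw₂ ▸ Set.singleton_subset_iff.2 (hTT (hyT (Set.mem_insert _ _))))
  have hedges : s(x, w₁) ≠ s(y, w₂) := by
    rw [Ne, Sym2.eq_iff]
    rintro (⟨rfl, -⟩ | ⟨rfl, -⟩)
    · exact hne rfl
    · exact hxy (adj_of_neighborSet_eq_singleton hw₂)
  rwa [Finset.card_pair hedges] at hbudget

lemma neighborSet_sdiff_ne_pair (hG : MinCounterexample G) {u₁ u₂ v x y : V} (hne : x ≠ y)
    (hu₁ : G.neighborSet u₁ = {v}) (hu₂ : G.neighborSet u₂ = {v}) :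
    G.neighborSet v \ {u₁, u₂} ≠ {x, y} := by
  intro hS
  have ⟨_, hdeg, hnoiso, _⟩ := hG
  set N := insert v (G.neighborSet v)
  set I := enclosed G N
  set A := G.neighborSet x ∪ G.neighborSet y
  have hx : G.Adj v x := (hS.symm.subset (Set.mem_insert x {y})).1
  have hy : G.Adj v y := (hS.symm.subset (Set.mem_insert_of_mem x rfl)).1
  have hvI : v ∉ I := fun h => h.1 (Set.mem_insert _ _)
  have hI : ∀ w ∈ I, G.neighborSet w ⊆ {x, y} := fun w hw =>
    hS ▸ neighborSet_subset_of_mem_enclosed_insert (by rintro u (rfl | rfl) <;> simp [*]) hw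
  have hI5 : 5 ≤ I.ncard := hG.five_le_ncard_enclosed hu₁
  have hIA : I ⊆ A := subset_neighborSet_union hnoiso hI
  have hxy := not_adj_of_subset_neighborSet_union hdeg hx hy hIA hvI
    (fun h => h.1 (Set.mem_insert_of_mem _ hx)) (fun h => h.1 (Set.mem_insert_of_mem _ hy))
    hI5
  obtain ⟨w₁, -, hw₁⟩ :=
    exists_mem_neighborSet_eq_singleton hdeg hnoiso hy hvI hI (by omega)
  obtain ⟨w₂, -, hw₂⟩ :=
    exists_mem_neighborSet_eq_singleton hdeg hnoiso hx hvI (Set.pair_comm x y ▸ hI) (by omega)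
  have hlarge := hG.eighteen_lt_ncard_union_enclosed (T := N ∪ A) hw₁ hw₂ hne hxy
    (Set.insert_subset (Or.inl (Set.mem_insert_of_mem _ hx))
      (Set.subset_union_left.trans Set.subset_union_right))
    (Set.insert_subset (Or.inl (Set.mem_insert_of_mem _ hy))
      (Set.subset_union_right.trans Set.subset_union_right))
  have hsmall : (N ∪ A ∪ enclosed G (N ∪ A)).ncard ≤ 15 :=
    ncard_union_enclosed_le_fifteen hdeg hnoiso hx hy (Set.mem_insert v _)
      ((Set.ncard_insert_le _ _).trans (Nat.succ_le_succ (hdeg v))) hvI hIA hI5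
      fun b hb => neighborSet_subset_of_mem_union_enclosed hu₁ hu₂ hS hb
  omega

end MinCounterexample

/-- In a minimum counterexample, no two distinct degree-1
vertices have a common neighbor. -/
theorem stmt6 {V : Type u} [Fintype V] (G : SimpleGraph V)
    (hG : MinCounterexample G) :
    ∀ u₁ u₂, u₁ ≠ u₂ → deg G u₁ = 1 → deg G u₂ = 1 →
      ¬ ∃ v, G.Adj u₁ v ∧ G.Adj u₂ v := by
  rintro u₁ u₂ hne hd₁ hd₂ ⟨v, hu₁v, hu₂v⟩
  have hu₁ := neighborSet_eq_singleton_of_deg_eq_one hd₁ hu₁v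
  have hu₂ := neighborSet_eq_singleton_of_deg_eq_one hd₂ hu₂v
  obtain ⟨x, y, hxy, hS⟩ := hG.exists_neighborSet_sdiff_eq_pair hne hu₁ hu₂
  exact hG.neighborSet_sdiff_ne_pair hxy hu₁ hu₂ hS
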